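/- arXiv:math/0702355 — 2 statements merged into one kernel-verified Lean document; each statement's English description precedes it below -/
import Mathlib

section
/- Let B be a bialgebra over a field k with multiplication m, unit η, comultiplication Δ, and counit ε. If B admits an antipode S (so that B is a Hopf algebra), then the linear map W on B ⊗ B defined by W(a ⊗ b) = Δ(a)(1 ⊗ b) is invertible, with inverse V(a ⊗ b) = ((id ⊗ S)(Δ(a)))(1 ⊗ b). -/
/-!
For a coalgebra `C` and an algebra `A`, every `f : C → A` gives an operator
`T f (c ⊗ a) = ∑ c₍₁₎ ⊗ f(c₍₂₎) a` on `C ⊗ A`. Coassociativity makes `T` multiplicative for the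
convolution product, `T (f * g) = T f ∘ T g`, and the counit axiom gives `T 1 = id`. The fundamental
operator is `W = T id` and `V = T S`; since the antipode `S` is a two-sided convolution inverse of
`id`, `V` and `W` are mutually inverse.
-/

open TensorProduct Coalgebra WithConv LinearMap

section FundamentalOperator

variable {R C A : Type*} [CommSemiring R] [AddCommMonoid C] [Module R C] [Coalgebra R C]
  [Semiring A] [Algebra R A]

noncomputable def fundamentalOperator (f : WithConv (C →ₗ[R] A)) : Module.End R (C ⊗[R] A) :=
  lTensor C (mul' R A ∘ₗ rTensor A f.ofConv) ∘ₗ (TensorProduct.assoc R C C A).toLinearMap ∘ₗ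
    rTensor A comul

lemma fundamentalOperator_tmul (f : WithConv (C →ₗ[R] A)) (c : C) (a : A) :
    fundamentalOperator f (c ⊗ₜ a) = lTensor C (mulRight R a ∘ₗ f.ofConv) (comul c) := by
  simp only [fundamentalOperator, LinearMap.comp_apply, rTensor_tmul]
  induction comul (R := R) c using TensorProduct.induction_on with
  | zero => simp
  | tmul x y => simp
  | add x y hx hy => simp_all [add_tmul]

lemma fundamentalOperator_tmul_eq_sum {ι : Type*} (f : WithConv (C →ₗ[R] A)) {c : C}
    (𝓡 : Repr R c ι) (a : A) :
    fundamentalOperator f (c ⊗ₜ a) = ∑ i ∈ 𝓡.index, 𝓡.left i ⊗ₜ (f (𝓡.right i) * a) := by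
  simp [fundamentalOperator_tmul, ← 𝓡.eq]

lemma fundamentalOperator_one : fundamentalOperator (1 : WithConv (C →ₗ[R] A)) = 1 := by
  refine TensorProduct.ext' fun c a => ?_
  calc fundamentalOperator 1 (c ⊗ₜ a)
      = lTensor C (mulRight R a ∘ₗ Algebra.linearMap R A) (lTensor C counit (comul c)) := by
        rw [fundamentalOperator_tmul, ← lTensor_comp_apply]; rfl
    _ = c ⊗ₜ a := by simp

lemma fundamentalOperator_mul (f g : WithConv (C →ₗ[R] A)) :
    fundamentalOperator (f * g) = fundamentalOperator f * fundamentalOperator g := by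
  refine TensorProduct.ext' fun c a => ?_
  let a₁ i := ℛ R ((ℛ R c).left i)
  let a₂ i := ℛ R ((ℛ R c).right i)
  have hcoassoc := congr(lTensor C (mul' R A ∘ₗ map f.ofConv (mulRight R a ∘ₗ g.ofConv))
    $(sum_tmul_tmul_eq (ℛ R c) a₁ a₂))
  simp only [map_sum, lTensor_tmul, LinearMap.comp_apply, map_tmul, mul'_apply,
    mulRight_apply] at hcoassoc
  calc fundamentalOperator (f * g) (c ⊗ₜ a)
      = ∑ i ∈ (ℛ R c).index, ∑ j ∈ (a₂ i).index,
          (ℛ R c).left i ⊗ₜ (f ((a₂ i).left j) * (g ((a₂ i).right j) * a)) := by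
        simp [fundamentalOperator_tmul_eq_sum _ (ℛ R c), (a₂ _).convMul_apply, Finset.sum_mul,
          tmul_sum, mul_assoc]
    _ = ∑ i ∈ (ℛ R c).index, ∑ j ∈ (a₁ i).index,
          (a₁ i).left j ⊗ₜ (f ((a₁ i).right j) * (g ((ℛ R c).right i) * a)) := hcoassoc.symm
    _ = (fundamentalOperator f * fundamentalOperator g) (c ⊗ₜ a) := by
        simp [fundamentalOperator_tmul_eq_sum _ (ℛ R c), fundamentalOperator_tmul_eq_sum _ (a₁ _)]

end FundamentalOperator

lemma mul_one_tmul_eq_lTensor_mulRight {R A : Type*} [CommSemiring R] [Semiring A]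
    [Algebra R A] (x : A ⊗[R] A) (b : A) : x * (1 ⊗ₜ b) = lTensor A (mulRight R b) x := by
  rw [← mulRight_apply (R := R), mulRight_tmul, mulRight_one]
  rfl

/-- In a Hopf algebra B over a field k, the fundamental operator
W(a ⊗ b) = Δ(a)(1 ⊗ b) is invertible with inverse
V(a ⊗ b) = ((id ⊗ S)(Δ a))(1 ⊗ b). -/
theorem fundamental_operator_invertible_of_antipode
    (k : Type*) (B : Type*) [Field k] [Ring B] [HopfAlgebra k B]
    (W V : B ⊗[k] B →ₗ[k] B ⊗[k] B)
    (hW : ∀ a b : B, W (a ⊗ₜ b) = Coalgebra.comul (R := k) a * ((1 : B) ⊗ₜ b))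
    (hV : ∀ a b : B, V (a ⊗ₜ b) =
      (TensorProduct.map LinearMap.id (HopfAlgebra.antipode (R := k)))
        (Coalgebra.comul (R := k) a) * ((1 : B) ⊗ₜ b)) :
    V ∘ₗ W = LinearMap.id ∧ W ∘ₗ V = LinearMap.id ∧ Function.Bijective W := by
  have hW' : W = fundamentalOperator (toConv LinearMap.id) := TensorProduct.ext' fun a b => by
    rw [hW, fundamentalOperator_tmul, mul_one_tmul_eq_lTensor_mulRight]
    rfl
  have hV' : V = fundamentalOperator (toConv (HopfAlgebra.antipode k)) :=
    TensorProduct.ext' fun a b => by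
      rw [hV, fundamentalOperator_tmul, mul_one_tmul_eq_lTensor_mulRight, lTensor_comp_apply]
      rfl
  have hVW : V ∘ₗ W = LinearMap.id := by
    rw [hV', hW', ← Module.End.mul_eq_comp, ← fundamentalOperator_mul, antipode_mul_id,
      fundamentalOperator_one, Module.End.one_eq_id]
  have hWV : W ∘ₗ V = LinearMap.id := by
    rw [hV', hW', ← Module.End.mul_eq_comp, ← fundamentalOperator_mul, id_mul_antipode,
      fundamentalOperator_one, Module.End.one_eq_id]
  exact ⟨hVW, hWV, Function.bijective_iff_has_inverse.2
    ⟨V, LinearMap.congr_fun hVW, LinearMap.congr_fun hWV⟩⟩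
end

section
/- Let ω: ℕ₊ → ℂ satisfy ω(1) = 0 and the Haar-type relation: for all n, Σ_{(a,b): ab = n} ω(a) e_b = ω(n) e_1 in the free module ⊕_{b≥1} ℂ e_b. Then ω ≡ 0 on ℕ₊. -/
/-- The key inductive step for uniqueness of the Haar state: if ω(1) = 0 and the
Haar-type relation Σ_{ab=n} ω(a)·e_b = ω(n)·e₁ holds for all n ≥ 1 in the free
ℂ-module with basis (e_b)_{b≥1} (e_b = single b 1), then comparing coefficients
of e_b for b ≠ 1 forces ω(a) = 0 whenever ab = n with b ≠ 1, and by induction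
ω ≡ 0 on ℕ₊. -/
theorem haar_relation_proper_divisors_and_zero
    (p : ℕ) (hp : p.Prime)
    (ω : ℕ → ℂ) (h1 : ω 1 = 0)
    (hrel : ∀ n : ℕ, 1 ≤ n →
      ∑ q ∈ Nat.divisorsAntidiagonal n, ω q.1 • Finsupp.single q.2 (1 : ℂ) =
        ω n • Finsupp.single 1 (1 : ℂ)) :
    (∀ n : ℕ, 1 ≤ n → ∀ a b : ℕ, a * b = n → b ≠ 1 → ω a = 0) ∧
    (∀ n : ℕ, 1 ≤ n → ω n = 0) := by
  have key : ∀ n : ℕ, 1 ≤ n → ∀ a b : ℕ, a * b = n → b ≠ 1 → ω a = 0 := by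
    intro n hn a b hab hb
    have h := congrArg (fun f => f b) (hrel n hn)
    simp only [Finsupp.finset_sum_apply, Finsupp.smul_apply, Finsupp.single_apply,
      smul_eq_mul] at h
    have hmem : (a, b) ∈ Nat.divisorsAntidiagonal n := by
      rw [Nat.mem_divisorsAntidiagonal]
      exact ⟨hab, by omega⟩
    have hb0 : 0 < b := by
      rcases Nat.eq_zero_or_pos b with h0 | h0
      · subst h0; omega
      · exact h0
    rw [Finset.sum_eq_single (a, b)] at h
    · simpa [Ne.symm hb] using h
    · intro q hq hne
      rw [Nat.mem_divisorsAntidiagonal] at hq hmem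
      have : q.2 ≠ b := by
        intro h2
        apply hne
        have : q.1 = a := by
          have := hq.1.trans hmem.1.symm
          rw [h2] at this
          exact Nat.eq_of_mul_eq_mul_right hb0 this
        exact Prod.ext this h2
      simp [this]
    · intro h; exact absurd hmem h
  refine ⟨key, fun n hn => ?_⟩
  rcases eq_or_lt_of_le hn with h | h
  · rw [← h]; exact h1
  · exact key (n * p) (Nat.mul_pos (by omega) hp.pos) n p rfl hp.ne_one
end
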